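/- arXiv:2003.02960 — 2 statements merged into one kernel-verified Lean document; each statement's English description precedes it below -/
import Mathlib

section
/- Let A_r be an n_r × p real matrix and A_f an n_f × p real matrix. Set Θ_rr = A_r A_rᵀ, Θ_rf = A_r A_fᵀ, Θ_ff = A_f A_fᵀ, and let Θ be the (n_r + n_f) × (n_r + n_f) block matrix fromBlocks(Θ_rr, Θ_rf, Θ_rfᵀ, Θ_ff). Assume Θ_rr is invertible and the Schur complement Θ_ff − Θ_rfᵀ Θ_rr⁻¹ Θ_rf is invertible, and set M = (Θ_ff − Θ_rfᵀ Θ_rr⁻¹ Θ_rf)⁻¹ (so Θ is invertible). Let e_r ∈ ℝ^{n_r}, e_f ∈ ℝ^{n_f}, and let e ∈ ℝ^{n_r+n_f} be their concatenation, and let A be the (n_r+n_f) × p matrix obtained by stacking A_r over A_f. Then A_rᵀ Θ_rr⁻¹ e_r − Aᵀ Θ⁻¹ e = P A_fᵀ M V, where P = I_p − A_rᵀ Θ_rr⁻¹ A_r and V = −e_f + Θ_rfᵀ Θ_rr⁻¹ e_r. -/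
/-!
Block Gaussian elimination solves `Θ x = (e_r, e_f)`: the forget block of the solution is
`w = M (e_f - Θ_rfᵀ Θ_rr⁻¹ e_r) = -M V` and the retain block is `Θ_rr⁻¹ (e_r - Θ_rf w)`.
Hence `Aᵀ Θ⁻¹ e = A_rᵀ Θ_rr⁻¹ e_r - A_rᵀ Θ_rr⁻¹ Θ_rf w + A_fᵀ w`, and since `Θ_rf = A_r A_fᵀ`
the difference with `A_rᵀ Θ_rr⁻¹ e_r` is `-(A_fᵀ - A_rᵀ Θ_rr⁻¹ A_r A_fᵀ) w = P A_fᵀ M V`.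
-/

open Matrix

section BlockSolve

variable {m n α : Type*} [Fintype m] [Fintype n] [DecidableEq m] [DecidableEq n] [CommRing α]

theorem Matrix.mulVec_nonsing_inv_mulVec {A : Matrix m m α} (hA : IsUnit A) (u : m → α) :
    A *ᵥ (A⁻¹ *ᵥ u) = u := by
  rw [mulVec_mulVec, mul_nonsing_inv _ ((isUnit_iff_isUnit_det A).mp hA), one_mulVec]

theorem Matrix.fromBlocks_inv_mulVec_sumElim {A : Matrix m m α} {B : Matrix m n α}
    {C : Matrix n m α} {D : Matrix n n α} (hA : IsUnit A) (hS : IsUnit (D - C * A⁻¹ * B))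
    {u : m → α} {v w : n → α} (hw : (D - C * A⁻¹ * B) *ᵥ w = v - C *ᵥ (A⁻¹ *ᵥ u)) :
    (fromBlocks A B C D)⁻¹ *ᵥ Sum.elim u v = Sum.elim (A⁻¹ *ᵥ (u - B *ᵥ w)) w := by
  let := hA.invertible
  have hΘ : IsUnit (fromBlocks A B C D) := by
    rwa [isUnit_fromBlocks_iff_of_invertible₁₁, invOf_eq_nonsing_inv]
  let := hΘ.invertible
  refine inv_mulVec_eq_vec ?_
  rw [fromBlocks_mulVec, Sum.elim_comp_inl, Sum.elim_comp_inr, mulVec_nonsing_inv_mulVec hA]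
  congr 1
  · abel
  · rw [sub_mulVec, ← mulVec_mulVec, ← mulVec_mulVec] at hw
    rw [mulVec_sub, mulVec_sub]
    linear_combination -hw

end BlockSolve

/-- **Proposition 2 (NTK optimal one-shot scrubbing shift) as an exact linear-algebra identity.**
With `Θ_rr = A_r A_rᵀ`, `Θ_rf = A_r A_fᵀ`, `Θ_ff = A_f A_fᵀ`, `Θ` the full NTK block matrix,
`M` the inverse Schur complement, `A` the stacked gradient matrix and `e` the stacked residuals,
the difference between the convergence points of linearized training on the retain set and on the
full dataset equals `P A_fᵀ M V`, where `P = I - A_rᵀ Θ_rr⁻¹ A_r` and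
`V = -e_f + Θ_rfᵀ Θ_rr⁻¹ e_r`. -/
theorem ntk_scrubbing_shift
    {nr nf p : ℕ} (Ar : Matrix (Fin nr) (Fin p) ℝ) (Af : Matrix (Fin nf) (Fin p) ℝ)
    (er : Fin nr → ℝ) (ef : Fin nf → ℝ)
    (hrr : IsUnit (Ar * Arᵀ))
    (hM : IsUnit (Af * Afᵀ - (Ar * Afᵀ)ᵀ * (Ar * Arᵀ)⁻¹ * (Ar * Afᵀ))) :
    Arᵀ.mulVec ((Ar * Arᵀ)⁻¹.mulVec er) -
        (fromRows Ar Af)ᵀ.mulVec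
          ((fromBlocks (Ar * Arᵀ) (Ar * Afᵀ) (Ar * Afᵀ)ᵀ (Af * Afᵀ))⁻¹.mulVec
            (Sum.elim er ef)) =
      (1 - Arᵀ * (Ar * Arᵀ)⁻¹ * Ar).mulVec
        (Afᵀ.mulVec
          ((Af * Afᵀ - (Ar * Afᵀ)ᵀ * (Ar * Arᵀ)⁻¹ * (Ar * Afᵀ))⁻¹.mulVec
            (-ef + (Ar * Afᵀ)ᵀ.mulVec ((Ar * Arᵀ)⁻¹.mulVec er)))) := by
  set S := Af * Afᵀ - (Ar * Afᵀ)ᵀ * (Ar * Arᵀ)⁻¹ * (Ar * Afᵀ)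
  set w := S⁻¹ *ᵥ (ef - (Ar * Afᵀ)ᵀ *ᵥ ((Ar * Arᵀ)⁻¹ *ᵥ er)) with hw
  have hSw : S *ᵥ w = ef - (Ar * Afᵀ)ᵀ *ᵥ ((Ar * Arᵀ)⁻¹ *ᵥ er) :=
    mulVec_nonsing_inv_mulVec hM _
  have hMV : S⁻¹ *ᵥ (-ef + (Ar * Afᵀ)ᵀ *ᵥ ((Ar * Arᵀ)⁻¹ *ᵥ er)) = -w := by
    rw [hw, ← mulVec_neg, neg_sub, neg_add_eq_sub]
  rw [fromBlocks_inv_mulVec_sumElim hrr hM hSw, transpose_fromRows, fromCols_mulVec_sumElim, hMV]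
  simp only [mulVec_neg, sub_mulVec, one_mulVec, mulVec_sub, ← mulVec_mulVec]
  abel
end

section
/- Let A be an n×p real matrix with Θ = A Aᵀ invertible, let f₀, Y ∈ ℝ^n, and let η > 0. Define w : ℝ → ℝ^p by w(t) = Aᵀ Θ⁻¹ (I − exp(−η Θ t)) (Y − f₀), where exp denotes the matrix exponential. Then w(0) = 0 and, for every t ∈ ℝ, w has derivative at t equal to −η Aᵀ (f₀ + A w(t) − Y); i.e., w solves the continuous gradient-descent (gradient-flow) equation ẇ = −η ∇f₀ᵀ ∇_{f} L for the L2 loss L(w) = (1/2)‖f₀ + A w − Y‖² of the linearized model. -/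
/-!
Since `Aᵀ Θ⁻¹` is a right inverse of `A`, the residual `f₀ + A w(t) - Y` of the linearized model
equals `-exp(-η Θ t) (Y - f₀)`. Differentiating the exponential produces a factor `-η Θ`, which
`Θ⁻¹` cancels, so `ẇ(t) = η Aᵀ exp(-η Θ t) (Y - f₀)` is `-η Aᵀ` times the residual.
-/

open Matrix

section
variable {𝕜 : Type*} [NontriviallyNormedField 𝕜] {m n : Type*} [Fintype n]

theorem HasDerivAt.mulVec_const {M : 𝕜 → Matrix m n 𝕜} {M' : Matrix m n 𝕜} {t : 𝕜}
    (h : HasDerivAt M M' t) (v : n → 𝕜) : HasDerivAt (fun s => M s *ᵥ v) (M' *ᵥ v) t := by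
  refine hasDerivAt_pi.2 fun i => ?_
  simp only [mulVec, dotProduct]
  exact HasDerivAt.fun_sum fun j _ => (hasDerivAt_pi.1 (hasDerivAt_pi.1 h i) j).mul_const (v j)

theorem HasDerivAt.const_mulVec {f : 𝕜 → n → 𝕜} {f' : n → 𝕜} {t : 𝕜}
    (B : Matrix m n 𝕜) (h : HasDerivAt f f' t) : HasDerivAt (fun s => B *ᵥ f s) (B *ᵥ f') t := by
  refine hasDerivAt_pi.2 fun i => ?_
  simp only [mulVec, dotProduct]
  exact HasDerivAt.fun_sum fun j _ => (hasDerivAt_pi.1 h j).const_mul (B i j)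
end

theorem hasDerivAt_exp_const_mul_smul {𝕂 𝔸 : Type*} [RCLike 𝕂] [NormedRing 𝔸]
    [NormedAlgebra 𝕂 𝔸] [CompleteSpace 𝔸] (c : 𝕂) (x : 𝔸) (t : 𝕂) :
    HasDerivAt (fun u : 𝕂 => NormedSpace.exp ((c * u) • x))
      (c • (x * NormedSpace.exp ((c * t) • x))) t := by
  simpa [Function.comp_def] using
    (hasDerivAt_exp_smul_const' x (c * t)).scomp t ((hasDerivAt_id t).const_mul c)

section
attribute [local instance] Matrix.linftyOpNormedRing Matrix.linftyOpNormedAlgebra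

theorem Matrix.hasDerivAt_exp_const_mul_smul {𝕂 m : Type*} [RCLike 𝕂] [Fintype m]
    [DecidableEq m] (c : 𝕂) (M : Matrix m m 𝕂) (t : 𝕂) :
    HasDerivAt (fun u : 𝕂 => NormedSpace.exp ((c * u) • M))
      (c • (M * NormedSpace.exp ((c * t) • M))) t :=
  _root_.hasDerivAt_exp_const_mul_smul c M t
end

theorem Matrix.mulVec_transpose_mulVec_nonsing_inv_mulVec {R m n : Type*} [CommRing R]
    [Fintype m] [Fintype n] [DecidableEq m] (A : Matrix m n R) (hA : IsUnit (A * Aᵀ))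
    (x : m → R) : A *ᵥ (Aᵀ *ᵥ ((A * Aᵀ)⁻¹ *ᵥ x)) = x := by
  rw [mulVec_mulVec, mulVec_mulVec, mul_nonsing_inv _ ((isUnit_iff_isUnit_det _).mp hA),
    one_mulVec]

theorem linearized_weight_dynamics_general
    {n p : ℕ} (A : Matrix (Fin n) (Fin p) ℝ) (hΘ : IsUnit (A * Aᵀ))
    (f₀ Y : Fin n → ℝ) (η : ℝ)
    (w : ℝ → (Fin p → ℝ))
    (hw : w = fun t => Aᵀ.mulVec ((A * Aᵀ)⁻¹.mulVec
      ((1 - NormedSpace.exp ((-η * t) • (A * Aᵀ))).mulVec (Y - f₀)))) :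
    w 0 = 0 ∧
      ∀ t : ℝ, HasDerivAt w ((-η) • (Aᵀ.mulVec (f₀ + A.mulVec (w t) - Y))) t := by
  subst hw
  refine ⟨by simp, fun t => ?_⟩
  have hderiv := (((hasDerivAt_exp_const_mul_smul (-η) (A * Aᵀ) t).mulVec_const
    (Y - f₀)).const_sub (Y - f₀)).const_mulVec (A * Aᵀ)⁻¹ |>.const_mulVec Aᵀ
  set E := NormedSpace.exp ((-η * t) • (A * Aᵀ))
  have hresidual :
      f₀ + A *ᵥ (Aᵀ *ᵥ ((A * Aᵀ)⁻¹ *ᵥ ((1 - E) *ᵥ (Y - f₀)))) - Y = -(E *ᵥ (Y - f₀)) := by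
    rw [mulVec_transpose_mulVec_nonsing_inv_mulVec A hΘ, sub_mulVec, one_mulVec]
    abel
  have hcancel : (A * Aᵀ)⁻¹ *ᵥ ((A * Aᵀ * E) *ᵥ (Y - f₀)) = E *ᵥ (Y - f₀) := by
    rw [mulVec_mulVec, ← Matrix.mul_assoc, nonsing_inv_mul _ ((isUnit_iff_isUnit_det _).mp hΘ),
      Matrix.one_mul]
  rw [hresidual]
  simp only [sub_mulVec, one_mulVec]
  convert hderiv using 1
  simp only [neg_mulVec, smul_mulVec, mulVec_neg, mulVec_smul, hcancel, neg_neg, neg_smul,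
    smul_neg]

/-- **Closed-form solution of the linearized weight dynamics (eq. (8)).**
`w(t) = Aᵀ Θ⁻¹ (I - exp(-η Θ t)) (Y - f₀)` satisfies `w(0) = 0` and the gradient-flow equation
`ẇ = -η Aᵀ (f₀ + A w - Y)` for the L2 loss of the linearized model. -/
theorem linearized_weight_dynamics
    {n p : ℕ} (A : Matrix (Fin n) (Fin p) ℝ) (hΘ : IsUnit (A * Aᵀ))
    (f₀ Y : Fin n → ℝ) (η : ℝ) (hη : 0 < η)
    (w : ℝ → (Fin p → ℝ))
    (hw : w = fun t => Aᵀ.mulVec ((A * Aᵀ)⁻¹.mulVec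
      ((1 - NormedSpace.exp ((-η * t) • (A * Aᵀ))).mulVec (Y - f₀)))) :
    w 0 = 0 ∧
      ∀ t : ℝ, HasDerivAt w ((-η) • (Aᵀ.mulVec (f₀ + A.mulVec (w t) - Y))) t :=
  linearized_weight_dynamics_general A hΘ f₀ Y η w hw
end
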